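/- arXiv:2409.06271 — 7 statements merged into one kernel-verified Lean document; each statement's English description precedes it below -/
import Mathlib

section
/- Let ψ be a divergence. For each A ⊆ D, define τ(A) = E[ψ(f(X), f(X^{∖A}))], assuming this expectation is finite and f(X) is integrable. Then τ is a sensitivity map for f with respect to P, i.e.: (i) τ(A) ≥ 0 for every A ⊆ D; (ii) τ(∅) = 0; (iii) for every A ⊆ D, τ(A) = 0 if and only if f(X) = E[f(X) | σ(X_{D∖A})] almost surely. -/
/-!
Parts (i) and (ii) are immediate, and `τ(A) = 0` holds exactly when `f(X) = f(X^{∖A})` a.s.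
After composing with `arctan`, which is injective, we may assume `Z = f(X)` is bounded. If `Z'`
is a conditionally independent copy of `Z` given `𝒢` and `W = E[Z | 𝒢]`, then `E[Z Z'] = E[W²]`
and `E[Z'²] = E[Z²]`, so `E[(Z - Z')²] = 2 E[Z²] - 2 E[W²] = 2 E[(Z - W)²]`. Hence `Z = Z'` a.s.
iff `Z = W` a.s., i.e. iff `Z` is a.e. `𝒢`-measurable, and the same holds for `tan Z = f(X)`.
-/

open MeasureTheory ProbabilityTheory Filter

/-- The σ-algebra `σ(X_{D∖A})` generated by the subvector of `X` indexed by `D ∖ A`. -/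
def sigmaRestrict {Ω : Type*} {d : ℕ} (X : Ω → Fin d → ℝ) (A : Finset (Fin d)) :
    MeasurableSpace Ω :=
  MeasurableSpace.comap (fun ω => (fun i : {i : Fin d // i ∈ Aᶜ} => X ω i)) inferInstance

section

variable {Ω : Type*} {m m₀ : MeasurableSpace Ω} {μ : Measure[m₀] Ω}

lemma integral_eq_zero_iff_ae_eq_of_divergence {α : Type*} {ψ : α → α → ℝ}
    (hψ0 : ∀ x y, 0 ≤ ψ x y) (hψeq : ∀ x y, ψ x y = 0 ↔ x = y) {F G : Ω → α}
    (h : Integrable (fun ω => ψ (F ω) (G ω)) μ) :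
    ∫ ω, ψ (F ω) (G ω) ∂μ = 0 ↔ F =ᵐ[μ] G := by
  rw [integral_eq_zero_iff_of_nonneg (fun ω => hψ0 _ _) h]
  exact eventually_congr (.of_forall fun ω => hψeq _ _)

lemma ae_eq_condExp_iff_aestronglyMeasurable {E : Type*} [NormedAddCommGroup E]
    [NormedSpace ℝ E] [CompleteSpace E] (hm : m ≤ m₀) [SigmaFinite (μ.trim hm)] {g : Ω → E}
    (hg : Integrable g μ) : g =ᵐ[μ] μ[g | m] ↔ AEStronglyMeasurable[m] g μ :=
  ⟨fun h => ⟨_, stronglyMeasurable_condExp, h⟩,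
    fun h => (condExp_of_aestronglyMeasurable' hm h hg).symm⟩

lemma aestronglyMeasurable_comp_iff_of_leftInverse {φ ρ : ℝ → ℝ} (hφ : Measurable φ)
    (hρ : Measurable ρ) (hρφ : Function.LeftInverse ρ φ) {g : Ω → ℝ} :
    AEStronglyMeasurable[m] (φ ∘ g) μ ↔ AEStronglyMeasurable[m] g μ := by
  have comp : ∀ {χ : ℝ → ℝ}, Measurable χ → ∀ {h : Ω → ℝ},
      AEStronglyMeasurable[m] h μ → AEStronglyMeasurable[m] (χ ∘ h) μ := by
    rintro χ hχ h ⟨k, hk, hhk⟩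
    exact ⟨χ ∘ k, (hχ.comp hk.measurable).stronglyMeasurable, hhk.fun_comp χ⟩
  refine ⟨fun h => ?_, comp hφ⟩
  simpa only [← Function.comp_assoc, hρφ.comp_eq_id, Function.id_comp] using comp hρ h

lemma integral_sq_sub_condExp (hm : m ≤ m₀) [IsFiniteMeasure μ] {Z : Ω → ℝ}
    (hZ : MemLp Z 2 μ) :
    ∫ ω, (Z ω - μ[Z | m] ω) ^ 2 ∂μ = ∫ ω, Z ω ^ 2 ∂μ - ∫ ω, μ[Z | m] ω ^ 2 ∂μ := by
  calc ∫ ω, (Z ω - μ[Z | m] ω) ^ 2 ∂μ = ∫ ω, Var[Z; μ | m] ω ∂μ := (integral_condExp hm).symm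
    _ = ∫ ω, (μ[Z ^ 2 | m] - μ[Z | m] ^ 2 : Ω → ℝ) ω ∂μ :=
      integral_congr_ae (condVar_ae_eq_condExp_sq_sub_sq_condExp hm hZ)
    _ = ∫ ω, Z ω ^ 2 ∂μ - ∫ ω, μ[Z | m] ω ^ 2 ∂μ := by
      rw [← integral_condExp hm (f := fun ω => Z ω ^ 2),
        ← integral_sub integrable_condExp (hZ.condExp one_le_two).integrable_sq]
      rfl

lemma integral_sq_sub_eq_two_mul_integral_sq_sub_condExp (hm : m ≤ m₀) [IsFiniteMeasure μ]
    {Z Z' : Ω → ℝ} (hZ : MemLp Z 2 μ) (hZ' : MemLp Z' 2 μ)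
    (hmul : ∫ ω, Z ω * Z' ω ∂μ = ∫ ω, μ[Z | m] ω ^ 2 ∂μ)
    (hsq : ∫ ω, Z' ω ^ 2 ∂μ = ∫ ω, Z ω ^ 2 ∂μ) :
    ∫ ω, (Z ω - Z' ω) ^ 2 ∂μ = 2 * ∫ ω, (Z ω - μ[Z | m] ω) ^ 2 ∂μ := by
  have hZZ' : Integrable (fun ω => Z ω * Z' ω) μ :=
    memLp_one_iff_integrable.1 (hZ'.mul hZ)
  have hexp : ∫ ω, (Z ω - Z' ω) ^ 2 ∂μ
      = ∫ ω, Z ω ^ 2 ∂μ - 2 * ∫ ω, Z ω * Z' ω ∂μ + ∫ ω, Z' ω ^ 2 ∂μ := by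
    have h₁ : Integrable (fun ω => Z ω ^ 2 - 2 * (Z ω * Z' ω)) μ :=
      hZ.integrable_sq.sub (hZZ'.const_mul 2)
    simp_rw [sub_sq, mul_assoc]
    rw [integral_add h₁ hZ'.integrable_sq, integral_sub hZ.integrable_sq (hZZ'.const_mul 2),
      integral_const_mul]
  rw [hexp, hmul, hsq, integral_sq_sub_condExp hm hZ]
  ring

end

lemma Real.measurable_tan : Measurable Real.tan := by
  rw [show Real.tan = fun x => Real.sin x / Real.cos x from funext Real.tan_eq_sin_div_cos]
  fun_prop

lemma Real.abs_arctan_le (x : ℝ) : |Real.arctan x| ≤ Real.pi / 2 :=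
  abs_le.2 ⟨(Real.neg_pi_div_two_lt_arctan x).le, (Real.arctan_lt_pi_div_two x).le⟩

/-- `Y` is a conditionally independent copy of `X` given `m`: the product formula for bounded
test functions encodes both conditional independence and equality of conditional laws. -/
def IsCondIndepCopy {Ω β : Type*} [MeasurableSpace β] {m₀ : MeasurableSpace Ω}
    (μ : Measure[m₀] Ω) (m : MeasurableSpace Ω) (X Y : Ω → β) : Prop :=
  ∀ φ φ' : β → ℝ, Measurable φ → Measurable φ' →
    (∃ C, ∀ x, |φ x| ≤ C) → (∃ C, ∀ x, |φ' x| ≤ C) →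
    μ[(fun ω => φ (X ω) * φ' (Y ω)) | m]
      =ᵐ[μ] fun ω => (μ[(fun ω => φ (X ω)) | m]) ω * (μ[(fun ω => φ' (X ω)) | m]) ω

namespace IsCondIndepCopy

variable {Ω β : Type*} [MeasurableSpace β] {m m₀ : MeasurableSpace Ω} {μ : Measure[m₀] Ω}
  [IsFiniteMeasure μ] {X Y : Ω → β} {φ : β → ℝ}

lemma integral_comp_eq (hXY : IsCondIndepCopy μ m X Y) (hm : m ≤ m₀) (hφ : Measurable φ)
    (hφb : ∃ C, ∀ x, |φ x| ≤ C) : ∫ ω, φ (Y ω) ∂μ = ∫ ω, φ (X ω) ∂μ := by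
  have hprod := hXY (fun _ => 1) φ measurable_const hφ ⟨1, fun _ => by simp⟩ hφb
  simp only [one_mul, condExp_const hm] at hprod
  rw [← integral_condExp hm, integral_congr_ae hprod, integral_condExp hm]

lemma integral_mul_eq (hXY : IsCondIndepCopy μ m X Y) (hm : m ≤ m₀) (hφ : Measurable φ)
    (hφb : ∃ C, ∀ x, |φ x| ≤ C) :
    ∫ ω, φ (X ω) * φ (Y ω) ∂μ = ∫ ω, (μ[(fun ω => φ (X ω)) | m]) ω ^ 2 ∂μ := by
  rw [← integral_condExp hm, integral_congr_ae (hXY φ φ hφ hφ hφb hφb)]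
  simp only [sq]

lemma comp_ae_eq_comp_iff (hXY : IsCondIndepCopy μ m X Y) (hm : m ≤ m₀) (hX : Measurable X)
    (hY : Measurable Y) (hφ : Measurable φ) (hφb : ∃ C, ∀ x, |φ x| ≤ C) :
    (fun ω => φ (X ω)) =ᵐ[μ] (fun ω => φ (Y ω)) ↔
      (fun ω => φ (X ω)) =ᵐ[μ] μ[(fun ω => φ (X ω)) | m] := by
  obtain ⟨C, hC⟩ := hφb
  have memLp : ∀ {V : Ω → β}, Measurable V → MemLp (fun ω => φ (V ω)) 2 μ := fun {V} hV =>
    .of_bound (hφ.comp hV).aestronglyMeasurable C (.of_forall fun ω => hC (V ω))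
  have hsq0 : ∀ x y : ℝ, 0 ≤ (x - y) ^ 2 := fun x y => sq_nonneg _
  have hsq : ∀ x y : ℝ, (x - y) ^ 2 = 0 ↔ x = y := fun x y => by
    rw [sq_eq_zero_iff, sub_eq_zero]
  have hZ := memLp hX
  rw [← integral_eq_zero_iff_ae_eq_of_divergence hsq0 hsq ((hZ.sub (memLp hY)).integrable_sq),
    ← integral_eq_zero_iff_ae_eq_of_divergence hsq0 hsq
      ((hZ.sub (hZ.condExp one_le_two)).integrable_sq),
    integral_sq_sub_eq_two_mul_integral_sq_sub_condExp hm hZ (memLp hY)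
      (hXY.integral_mul_eq hm hφ ⟨C, hC⟩)
      (hXY.integral_comp_eq hm (hφ.pow_const 2) ⟨C ^ 2, fun x => ?_⟩),
    mul_eq_zero, or_iff_right two_ne_zero]
  simpa only [abs_pow, sq_abs] using pow_le_pow_left₀ (abs_nonneg _) (hC x) 2

lemma ae_eq_iff (hXY : IsCondIndepCopy μ m X Y) (hm : m ≤ m₀) (hX : Measurable X)
    (hY : Measurable Y) {g : β → ℝ} (hg : Measurable g) (hgX : Integrable (fun ω => g (X ω)) μ) :
    (fun ω => g (X ω)) =ᵐ[μ] (fun ω => g (Y ω)) ↔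
      (fun ω => g (X ω)) =ᵐ[μ] μ[(fun ω => g (X ω)) | m] := by
  have harctan := Real.measurable_arctan.comp hg
  have hbound : ∃ C, ∀ x, |Real.arctan (g x)| ≤ C := ⟨_, fun x => Real.abs_arctan_le (g x)⟩
  calc (fun ω => g (X ω)) =ᵐ[μ] (fun ω => g (Y ω))
      ↔ (fun ω => Real.arctan (g (X ω))) =ᵐ[μ] (fun ω => Real.arctan (g (Y ω))) :=
        eventually_congr (.of_forall fun ω => Real.arctan_injective.eq_iff.symm)
    _ ↔ (fun ω => Real.arctan (g (X ω))) =ᵐ[μ] μ[(fun ω => Real.arctan (g (X ω))) | m] :=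
        hXY.comp_ae_eq_comp_iff hm hX hY harctan hbound
    _ ↔ AEStronglyMeasurable[m] (Real.arctan ∘ fun ω => g (X ω)) μ :=
        ae_eq_condExp_iff_aestronglyMeasurable hm
          (.of_bound (harctan.comp hX).aestronglyMeasurable _
            (.of_forall fun ω => Real.abs_arctan_le (g (X ω))))
    _ ↔ AEStronglyMeasurable[m] (fun ω => g (X ω)) μ :=
        aestronglyMeasurable_comp_iff_of_leftInverse Real.measurable_arctan Real.measurable_tan
          Real.tan_arctan
    _ ↔ _ := (ae_eq_condExp_iff_aestronglyMeasurable hm hgX).symm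

end IsCondIndepCopy

lemma sigmaRestrict_le {Ω : Type*} [MeasurableSpace Ω] {d : ℕ} {X : Ω → Fin d → ℝ}
    (hX : Measurable X) (A : Finset (Fin d)) : sigmaRestrict X A ≤ ‹MeasurableSpace Ω› :=
  measurable_iff_comap_le.mp (by fun_prop)

theorem stmt0_general
    {Ω : Type*} [MeasurableSpace Ω] (μ : Measure Ω) [IsProbabilityMeasure μ]
    {d : ℕ} (X : Ω → Fin d → ℝ) (hX : Measurable X)
    (f : (Fin d → ℝ) → ℝ) (hf : Measurable f)
    (ψ : ℝ → ℝ → ℝ)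
    (hψ0 : ∀ x y : ℝ, 0 ≤ ψ x y) (hψeq : ∀ x y : ℝ, ψ x y = 0 ↔ x = y)
    (X' : Finset (Fin d) → Ω → (Fin d → ℝ))
    (hX' : ∀ A, Measurable (X' A))
    -- (a) `X` and `X' A` are conditionally i.i.d. given `σ(X_{D∖A})`
    (hiid : ∀ (A : Finset (Fin d)) (φ φ' : (Fin d → ℝ) → ℝ),
      Measurable φ → Measurable φ' →
      (∃ C, ∀ x, |φ x| ≤ C) → (∃ C, ∀ x, |φ' x| ≤ C) →
      μ[(fun ω => φ (X ω) * φ' (X' A ω)) | sigmaRestrict X A]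
        =ᵐ[μ] fun ω => (μ[(fun ω => φ (X ω)) | sigmaRestrict X A]) ω *
                        (μ[(fun ω => φ' (X ω)) | sigmaRestrict X A]) ω)
    -- (b) `X' A` agrees with `X` on the coordinates outside `A`, almost surely
    (hfix : ∀ A : Finset (Fin d), ∀ᵐ ω ∂μ, ∀ i ∉ A, X' A ω i = X ω i)
    -- integrability assumptions
    (hint : ∀ A : Finset (Fin d), Integrable (fun ω => ψ (f (X ω)) (f (X' A ω))) μ)
    (hfint : Integrable (fun ω => f (X ω)) μ) :
    (∀ A : Finset (Fin d), 0 ≤ ∫ ω, ψ (f (X ω)) (f (X' A ω)) ∂μ) ∧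
    (∫ ω, ψ (f (X ω)) (f (X' (∅ : Finset (Fin d)) ω)) ∂μ = 0) ∧
    (∀ A : Finset (Fin d),
      ∫ ω, ψ (f (X ω)) (f (X' A ω)) ∂μ = 0 ↔
        (fun ω => f (X ω)) =ᵐ[μ] μ[(fun ω => f (X ω)) | sigmaRestrict X A]) := by
  refine ⟨fun A => integral_nonneg fun ω => hψ0 _ _, ?_, fun A => ?_⟩
  · rw [integral_eq_zero_iff_ae_eq_of_divergence hψ0 hψeq (hint ∅)]
    filter_upwards [hfix ∅] with ω hω
    exact congrArg f (funext fun i => (hω i (Finset.notMem_empty i)).symm)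
  · rw [integral_eq_zero_iff_ae_eq_of_divergence hψ0 hψeq (hint A)]
    exact IsCondIndepCopy.ae_eq_iff (hiid A) (sigmaRestrict_le hX A) hX (hX' A) hf hfint

/-- Proposition 1: for a divergence `ψ`, the map `τ(A) = E[ψ(f(X), f(X^{∖A}))]` is a
sensitivity map for `f` with respect to the law of `X`:
(i) `τ(A) ≥ 0`; (ii) `τ(∅) = 0`; (iii) `τ(A) = 0` iff `f(X) = E[f(X) | σ(X_{D∖A})]` a.s.
Here, for each `A`, `X' A` plays the role of `X^{∖A}`: it agrees with `X` on the
coordinates in `D∖A` almost surely, and `X` and `X' A` are conditionally independent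
and identically distributed given `σ(X_{D∖A})` (expressed by the product formula for
conditional expectations of bounded measurable functions of `X` and `X' A`). -/
theorem stmt0
    {Ω : Type*} [MeasurableSpace Ω] (μ : Measure Ω) [IsProbabilityMeasure μ]
    {d : ℕ} (X : Ω → Fin d → ℝ) (hX : Measurable X)
    (f : (Fin d → ℝ) → ℝ) (hf : Measurable f)
    (ψ : ℝ → ℝ → ℝ) (hψm : Measurable fun q : ℝ × ℝ => ψ q.1 q.2)
    (hψ0 : ∀ x y : ℝ, 0 ≤ ψ x y) (hψeq : ∀ x y : ℝ, ψ x y = 0 ↔ x = y)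
    (X' : Finset (Fin d) → Ω → (Fin d → ℝ))
    (hX' : ∀ A, Measurable (X' A))
    -- (a) `X` and `X' A` are conditionally i.i.d. given `σ(X_{D∖A})`
    (hiid : ∀ (A : Finset (Fin d)) (φ φ' : (Fin d → ℝ) → ℝ),
      Measurable φ → Measurable φ' →
      (∃ C, ∀ x, |φ x| ≤ C) → (∃ C, ∀ x, |φ' x| ≤ C) →
      μ[(fun ω => φ (X ω) * φ' (X' A ω)) | sigmaRestrict X A]
        =ᵐ[μ] fun ω => (μ[(fun ω => φ (X ω)) | sigmaRestrict X A]) ω *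
                        (μ[(fun ω => φ' (X ω)) | sigmaRestrict X A]) ω)
    -- (b) `X' A` agrees with `X` on the coordinates outside `A`, almost surely
    (hfix : ∀ A : Finset (Fin d), ∀ᵐ ω ∂μ, ∀ i ∉ A, X' A ω i = X ω i)
    -- integrability assumptions
    (hint : ∀ A : Finset (Fin d), Integrable (fun ω => ψ (f (X ω)) (f (X' A ω))) μ)
    (hfint : Integrable (fun ω => f (X ω)) μ) :
    (∀ A : Finset (Fin d), 0 ≤ ∫ ω, ψ (f (X ω)) (f (X' A ω)) ∂μ) ∧
    (∫ ω, ψ (f (X ω)) (f (X' (∅ : Finset (Fin d)) ω)) ∂μ = 0) ∧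
    (∀ A : Finset (Fin d),
      ∫ ω, ψ (f (X ω)) (f (X' A ω)) ∂μ = 0 ↔
        (fun ω => f (X ω)) =ᵐ[μ] μ[(fun ω => f (X ω)) | sigmaRestrict X A]) :=
  stmt0_general μ X hX f hf ψ hψ0 hψeq X' hX' hiid hfix hint hfint
end

section
/- Let ψ be a divergence, A ⊆ D, and let κ be a regular conditional distribution of f(X) given X_{D∖A} (the conditional distribution kernel). Let g : ℝ^{|D∖A|} → ℝ be Borel measurable and suppose that for (P ∘ X_{D∖A}^{-1})-almost every x, ∫ ψ(y, g(x)) κ(x, dy) ≤ ∫ ψ(y, θ) κ(x, dy) for every θ ∈ ℝ. Assume all expectations below are finite. Then E[ψ(f(X), g(X_{D∖A}))] ≤ E[ψ(f(X), f(X^{∖A}))]; that is, the contrast-based index τ̃(A) is bounded above by the divergence-based index τ(A). -/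
open MeasureTheory ProbabilityTheory

/-!
Write `Z = X_{D∖A}`, `U = f(X)` and `V = f(X^{∖A})`. Conditionally on `Z = x`, the pair `(U, V)`
is i.i.d. with law `κ(x, ·)`, so `(Z, U, V)` has law `P_Z ⊗ (κ × κ)` and
`E[ψ(U, V)] = ∫ ∫ (∫ ψ(y, y') κ(x, dy)) κ(x, dy') P_Z(dx)`. Since `g(x)` minimizes the inner
integral as a function of `y'`, this is at least `∫ ∫ ψ(y, g(x)) κ(x, dy) P_Z(dx) = E[ψ(U, g(Z))]`.
-/

open scoped ENNReal

section Integral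

variable {α β : Type*} {mα : MeasurableSpace α} {mβ : MeasurableSpace β}
  {ρ : Measure α} {h₁ h₂ : α → ℝ}

lemma lintegral_ofReal_le_of_integral_le (h₁_nonneg : 0 ≤ᵐ[ρ] h₁) (h₂_nonneg : 0 ≤ᵐ[ρ] h₂)
    (hh₁ : Integrable h₁ ρ) (hh₂ : AEStronglyMeasurable h₂ ρ)
    (hle : ∫ x, h₁ x ∂ρ ≤ ∫ x, h₂ x ∂ρ) :
    ∫⁻ x, ENNReal.ofReal (h₁ x) ∂ρ ≤ ∫⁻ x, ENNReal.ofReal (h₂ x) ∂ρ := by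
  by_cases hh₂i : Integrable h₂ ρ
  · rw [← ofReal_integral_eq_lintegral_ofReal hh₁ h₁_nonneg,
      ← ofReal_integral_eq_lintegral_ofReal hh₂i h₂_nonneg]
    exact ENNReal.ofReal_le_ofReal hle
  · have h_infinite : ¬ ∫⁻ x, ENNReal.ofReal (h₂ x) ∂ρ < ∞ := fun h =>
      hh₂i ⟨hh₂, (hasFiniteIntegral_iff_ofReal h₂_nonneg).mpr h⟩
    rw [not_lt_top_iff.mp h_infinite]
    exact le_top

lemma integral_le_integral_of_lintegral_ofReal_le (h₁_nonneg : 0 ≤ᵐ[ρ] h₁)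
    (h₂_nonneg : 0 ≤ᵐ[ρ] h₂) (hh₁ : AEStronglyMeasurable h₁ ρ) (hh₂ : Integrable h₂ ρ)
    (hle : ∫⁻ x, ENNReal.ofReal (h₁ x) ∂ρ ≤ ∫⁻ x, ENNReal.ofReal (h₂ x) ∂ρ) :
    ∫ x, h₁ x ∂ρ ≤ ∫ x, h₂ x ∂ρ := by
  rw [integral_eq_lintegral_of_nonneg_ae h₁_nonneg hh₁,
    integral_eq_lintegral_of_nonneg_ae h₂_nonneg hh₂.aestronglyMeasurable]
  exact ENNReal.toReal_mono ((hasFiniteIntegral_iff_ofReal h₂_nonneg).mp hh₂.2).ne hle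

lemma lintegral_ofReal_le_lintegral_lintegral_of_forall_integral_le
    {ρ : Measure β} [IsProbabilityMeasure ρ] {ψ : β → β → ℝ}
    (hψm : Measurable fun q : β × β => ψ q.1 q.2) (hψ0 : ∀ y θ, 0 ≤ ψ y θ) {a : β}
    (ha : Integrable (fun y => ψ y a) ρ) (hmin : ∀ θ, ∫ y, ψ y a ∂ρ ≤ ∫ y, ψ y θ ∂ρ) :
    ∫⁻ y, ENNReal.ofReal (ψ y a) ∂ρ ≤ ∫⁻ y', ∫⁻ y, ENNReal.ofReal (ψ y y') ∂ρ ∂ρ :=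
  calc ∫⁻ y, ENNReal.ofReal (ψ y a) ∂ρ
      = ∫⁻ _, ∫⁻ y, ENNReal.ofReal (ψ y a) ∂ρ ∂ρ := by rw [lintegral_const, measure_univ, mul_one]
    _ ≤ ∫⁻ y', ∫⁻ y, ENNReal.ofReal (ψ y y') ∂ρ ∂ρ := lintegral_mono fun θ =>
        lintegral_ofReal_le_of_integral_le (.of_forall (hψ0 · a)) (.of_forall (hψ0 · θ)) ha
          (hψm.comp (measurable_id.prodMk measurable_const)).aestronglyMeasurable (hmin θ)

end Integral

section ConditionalLaw

variable {Ω α β : Type*} {mΩ : MeasurableSpace Ω} {mα : MeasurableSpace α}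
  {mβ : MeasurableSpace β} {μ : Measure Ω} {Z : Ω → α} {U V : Ω → β} {κ : Kernel α β}

lemma lintegral_eq_lintegral_lintegral_of_map_eq_compProd {ν : Measure α} [SFinite ν]
    [IsSFiniteKernel κ] {W : Ω → α × β} (hW : Measurable W) (hWlaw : μ.map W = ν ⊗ₘ κ)
    {F : α × β → ℝ≥0∞} (hF : Measurable F) :
    ∫⁻ ω, F (W ω) ∂μ = ∫⁻ x, ∫⁻ y, F (x, y) ∂κ x ∂ν := by
  rw [← Measure.lintegral_compProd hF, ← hWlaw, lintegral_map hF hW]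

lemma ae_integrable_of_map_eq_compProd {ν : Measure α} [SFinite ν] [IsSFiniteKernel κ]
    {W : Ω → α × β} (hW : Measurable W) (hWlaw : μ.map W = ν ⊗ₘ κ)
    {F : α × β → ℝ} (hF : Measurable F) (hFW : Integrable (fun ω => F (W ω)) μ) :
    ∀ᵐ x ∂ν, Integrable (fun y => F (x, y)) (κ x) := by
  have h : Integrable F (ν ⊗ₘ κ) := by
    rw [← hWlaw]
    exact (integrable_map_measure hF.aestronglyMeasurable hW.aemeasurable).mpr hFW
  exact ((Measure.integrable_compProd_iff h.aestronglyMeasurable).mp h).1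

lemma map_prodMk_eq_compProd [IsFiniteMeasure μ] [IsSFiniteKernel κ]
    (hZ : Measurable Z) (hU : Measurable U)
    (hκ : ∀ T, MeasurableSet T → ∀ S, MeasurableSet S →
      μ (Z ⁻¹' T ∩ U ⁻¹' S) = ∫⁻ x in T, κ x S ∂(μ.map Z)) :
    μ.map (fun ω => (Z ω, U ω)) = μ.map Z ⊗ₘ κ :=
  Measure.ext_prod fun hT hS => by
    rw [Measure.map_apply (hZ.prodMk hU) (hT.prod hS), Measure.compProd_apply_prod hT hS]
    exact hκ _ hT _ hS

lemma measure_preimage_inter_eq_setLIntegral [SFinite μ] [IsSFiniteKernel κ]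
    (hZ : Measurable Z) (hU : Measurable U)
    (hZU : μ.map (fun ω => (Z ω, U ω)) = μ.map Z ⊗ₘ κ)
    {T : Set α} (hT : MeasurableSet T) {S : Set β} (hS : MeasurableSet S) :
    μ (Z ⁻¹' T ∩ U ⁻¹' S) = ∫⁻ x in T, κ x S ∂(μ.map Z) := by
  rw [← Measure.compProd_apply_prod hT hS, ← hZU,
    Measure.map_apply (hZ.prodMk hU) (hT.prod hS)]
  rfl

lemma setIntegral_indicator_one {s W : Set Ω} (hW : MeasurableSet W) :
    ∫ ω in s, W.indicator 1 ω ∂μ = μ.real (s ∩ W) := by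
  rw [integral_indicator_one hW, measureReal_restrict_apply hW, Set.inter_comm]

lemma setIntegral_preimage_toReal_comp (hZ : Measurable Z) {F : α → ℝ≥0∞} (hF : Measurable F)
    (hF_lt_top : ∀ x, F x < ∞) {T : Set α} (hT : MeasurableSet T) :
    ∫ ω in Z ⁻¹' T, (F (Z ω)).toReal ∂μ = (∫⁻ x in T, F x ∂(μ.map Z)).toReal := by
  rw [← setIntegral_map hT hF.ennreal_toReal.aestronglyMeasurable hZ.aemeasurable,
    integral_toReal hF.aemeasurable (.of_forall hF_lt_top)]

lemma measureReal_kernel_ae_eq_condExp [IsFiniteMeasure μ] [IsFiniteKernel κ]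
    (hZ : Measurable Z) (hU : Measurable U)
    (hZU : μ.map (fun ω => (Z ω, U ω)) = μ.map Z ⊗ₘ κ) {S : Set β} (hS : MeasurableSet S) :
    (fun ω => (κ (Z ω)).real S) =ᵐ[μ] μ[(U ⁻¹' S).indicator 1 | mα.comap Z] := by
  have hκS : Measurable fun x => (κ x).real S := (κ.measurable_coe hS).ennreal_toReal
  refine ae_eq_condExp_of_forall_setIntegral_eq hZ.comap_le
    ((integrable_const 1).indicator (hU hS)) (fun _ _ _ => ?_) ?_
    (hκS.comp (Measurable.of_comap_le le_rfl)).aestronglyMeasurable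
  · refine (Integrable.of_bound (hκS.comp hZ).aestronglyMeasurable κ.bound.toReal
      (.of_forall fun ω => ?_)).integrableOn
    rw [Function.comp_apply, Real.norm_of_nonneg measureReal_nonneg]
    exact ENNReal.toReal_mono κ.bound_ne_top (κ.measure_le_bound _ _)
  · rintro _ ⟨T, hT, rfl⟩ -
    rw [setIntegral_indicator_one (hU hS), measureReal_def,
      measure_preimage_inter_eq_setLIntegral hZ hU hZU hT hS]
    exact setIntegral_preimage_toReal_comp hZ (κ.measurable_coe hS)
      (fun _ => measure_lt_top _ _) hT

lemma condExp_indicator_inter_ae_eq_mul {γ : Type*} [MeasurableSpace γ] {m : MeasurableSpace Ω}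
    {Y Y' : Ω → γ} {f : γ → β} (hf : Measurable f)
    (hiid : ∀ φ φ' : γ → ℝ, Measurable φ → Measurable φ' →
      (∃ C, ∀ x, |φ x| ≤ C) → (∃ C, ∀ x, |φ' x| ≤ C) →
      μ[fun ω => φ (Y ω) * φ' (Y' ω) | m]
        =ᵐ[μ] fun ω => μ[fun ω => φ (Y ω) | m] ω * μ[fun ω => φ' (Y ω) | m] ω)
    {S₁ S₂ : Set β} (hS₁ : MeasurableSet S₁) (hS₂ : MeasurableSet S₂) :
    μ[((fun ω => f (Y ω)) ⁻¹' S₁ ∩ (fun ω => f (Y' ω)) ⁻¹' S₂).indicator (1 : Ω → ℝ) | m]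
      =ᵐ[μ] μ[((fun ω => f (Y ω)) ⁻¹' S₁).indicator 1 | m]
        * μ[((fun ω => f (Y ω)) ⁻¹' S₂).indicator 1 | m] := by
  have hbdd (S : Set β) : ∃ C, ∀ x, |(f ⁻¹' S).indicator (1 : γ → ℝ) x| ≤ C :=
    ⟨1, fun x => by by_cases hx : x ∈ f ⁻¹' S <;> simp [hx]⟩
  rw [Set.inter_indicator_one]
  exact hiid _ _ (measurable_const.indicator (hf hS₁)) (measurable_const.indicator (hf hS₂))
    (hbdd S₁) (hbdd S₂)

-- `hUV`: given `Z`, the variable `V` is independent of `U` and has the same conditional law.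
lemma map_prodMk_prodMk_eq_compProd_prod [IsFiniteMeasure μ] [IsFiniteKernel κ]
    (hZ : Measurable Z) (hU : Measurable U) (hV : Measurable V)
    (hZU : μ.map (fun ω => (Z ω, U ω)) = μ.map Z ⊗ₘ κ)
    (hUV : ∀ ⦃S₁ S₂ : Set β⦄, MeasurableSet S₁ → MeasurableSet S₂ →
      μ[(U ⁻¹' S₁ ∩ V ⁻¹' S₂).indicator (1 : Ω → ℝ) | mα.comap Z]
        =ᵐ[μ] μ[(U ⁻¹' S₁).indicator 1 | mα.comap Z] * μ[(U ⁻¹' S₂).indicator 1 | mα.comap Z]) :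
    μ.map (fun ω => (Z ω, U ω, V ω)) = μ.map Z ⊗ₘ (κ ×ₖ κ) := by
  refine Measure.ext_prod₃ fun {T S₁ S₂} hT hS₁ hS₂ => ?_
  have hW : MeasurableSet (U ⁻¹' S₁ ∩ V ⁻¹' S₂) := (hU hS₁).inter (hV hS₂)
  rw [Measure.map_apply (hZ.prodMk (hU.prodMk hV)) (hT.prod (hS₁.prod hS₂)),
    ← ENNReal.toReal_eq_toReal_iff' (measure_ne_top _ _) (measure_ne_top _ _),
    Measure.compProd_apply_prod hT (hS₁.prod hS₂)]
  simp only [Kernel.prod_apply, Measure.prod_prod]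
  change μ.real (Z ⁻¹' T ∩ (U ⁻¹' S₁ ∩ V ⁻¹' S₂)) = _
  rw [← setIntegral_indicator_one hW,
    ← setIntegral_condExp hZ.comap_le ((integrable_const 1).indicator hW) ⟨T, hT, rfl⟩,
    ← setIntegral_preimage_toReal_comp (F := fun x => κ x S₁ * κ x S₂) hZ
      ((κ.measurable_coe hS₁).mul (κ.measurable_coe hS₂))
      (fun _ => ENNReal.mul_lt_top (measure_lt_top _ _) (measure_lt_top _ _)) hT]
  refine setIntegral_congr_ae (hZ hT) ?_
  filter_upwards [hUV hS₁ hS₂, measureReal_kernel_ae_eq_condExp hZ hU hZU hS₁,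
    measureReal_kernel_ae_eq_condExp hZ hU hZU hS₂] with ω h h₁ h₂ _
  rw [h, Pi.mul_apply, ← h₁, ← h₂, ENNReal.toReal_mul]
  rfl

lemma lintegral_contrast_le_lintegral_divergence [IsFiniteMeasure μ] [IsMarkovKernel κ]
    (hZ : Measurable Z) (hU : Measurable U) (hV : Measurable V)
    (hZU : μ.map (fun ω => (Z ω, U ω)) = μ.map Z ⊗ₘ κ)
    (hZUV : μ.map (fun ω => (Z ω, U ω, V ω)) = μ.map Z ⊗ₘ (κ ×ₖ κ))
    {ψ : β → β → ℝ} (hψm : Measurable fun q : β × β => ψ q.1 q.2) (hψ0 : ∀ y θ, 0 ≤ ψ y θ)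
    {g : α → β} (hg : Measurable g)
    (hmin : ∀ᵐ x ∂(μ.map Z), ∀ θ, ∫ y, ψ y (g x) ∂(κ x) ≤ ∫ y, ψ y θ ∂(κ x))
    (hint : Integrable (fun ω => ψ (U ω) (g (Z ω))) μ) :
    ∫⁻ ω, ENNReal.ofReal (ψ (U ω) (g (Z ω))) ∂μ ≤ ∫⁻ ω, ENNReal.ofReal (ψ (U ω) (V ω)) ∂μ := by
  have hcontrast : Measurable fun p : α × β => ψ p.2 (g p.1) :=
    hψm.comp (measurable_snd.prodMk (hg.comp measurable_fst))
  have hκ_int : ∀ᵐ x ∂(μ.map Z), Integrable (fun y => ψ y (g x)) (κ x) :=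
    ae_integrable_of_map_eq_compProd (hZ.prodMk hU) hZU hcontrast hint
  calc ∫⁻ ω, ENNReal.ofReal (ψ (U ω) (g (Z ω))) ∂μ
      = ∫⁻ x, ∫⁻ y, ENNReal.ofReal (ψ y (g x)) ∂κ x ∂(μ.map Z) :=
        lintegral_eq_lintegral_lintegral_of_map_eq_compProd (hZ.prodMk hU) hZU
          (F := fun p => ENNReal.ofReal (ψ p.2 (g p.1))) hcontrast.ennreal_ofReal
    _ ≤ ∫⁻ x, ∫⁻ y', ∫⁻ y, ENNReal.ofReal (ψ y y') ∂κ x ∂κ x ∂(μ.map Z) := by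
        refine lintegral_mono_ae ?_
        filter_upwards [hmin, hκ_int] with x hx_min hx_int
        exact lintegral_ofReal_le_lintegral_lintegral_of_forall_integral_le hψm hψ0 hx_int hx_min
    _ = ∫⁻ x, ∫⁻ y, ENNReal.ofReal (ψ y.1 y.2) ∂(κ ×ₖ κ) x ∂(μ.map Z) :=
        lintegral_congr fun x => (Kernel.lintegral_prod_symm κ κ x hψm.ennreal_ofReal).symm
    _ = ∫⁻ ω, ENNReal.ofReal (ψ (U ω) (V ω)) ∂μ :=
        (lintegral_eq_lintegral_lintegral_of_map_eq_compProd (hZ.prodMk (hU.prodMk hV)) hZUV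
          (F := fun p => ENNReal.ofReal (ψ p.2.1 p.2.2))
          (hψm.comp measurable_snd).ennreal_ofReal).symm

end ConditionalLaw

theorem stmt5_general
    {Ω : Type*} [MeasurableSpace Ω] (μ : Measure Ω) [IsProbabilityMeasure μ]
    {d : ℕ} (X : Ω → Fin d → ℝ) (hX : Measurable X)
    (f : (Fin d → ℝ) → ℝ) (hf : Measurable f)
    (ψ : ℝ → ℝ → ℝ) (hψm : Measurable fun q : ℝ × ℝ => ψ q.1 q.2)
    (hψ0 : ∀ x y : ℝ, 0 ≤ ψ x y)
    (A : Finset (Fin d)) (X' : Ω → (Fin d → ℝ)) (hX' : Measurable X')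
    -- (a) `X` and `X'` are conditionally i.i.d. given `σ(X_{D∖A})`
    (hiid : ∀ (φ φ' : (Fin d → ℝ) → ℝ),
      Measurable φ → Measurable φ' →
      (∃ C, ∀ x, |φ x| ≤ C) → (∃ C, ∀ x, |φ' x| ≤ C) →
      μ[(fun ω => φ (X ω) * φ' (X' ω)) | sigmaRestrict X A]
        =ᵐ[μ] fun ω => (μ[(fun ω => φ (X ω)) | sigmaRestrict X A]) ω *
                        (μ[(fun ω => φ' (X ω)) | sigmaRestrict X A]) ω)
    -- `κ` is a regular conditional distribution of `f(X)` given `X_{D∖A}`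
    (κ : Kernel ({i : Fin d // i ∈ Aᶜ} → ℝ) ℝ) [IsMarkovKernel κ]
    (hκ : ∀ (T : Set ({i : Fin d // i ∈ Aᶜ} → ℝ)), MeasurableSet T →
      ∀ (S : Set ℝ), MeasurableSet S →
      μ ((fun ω => (fun i : {i : Fin d // i ∈ Aᶜ} => X ω i)) ⁻¹' T ∩
          (fun ω => f (X ω)) ⁻¹' S)
        = ∫⁻ x in T, κ x S ∂(μ.map (fun ω => (fun i : {i : Fin d // i ∈ Aᶜ} => X ω i))))
    -- `g(x)` minimizes `θ ↦ ∫ ψ(y, θ) κ(x, dy)` for almost every `x`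
    (g : ({i : Fin d // i ∈ Aᶜ} → ℝ) → ℝ) (hg : Measurable g)
    (hmin : ∀ᵐ x ∂(μ.map (fun ω => (fun i : {i : Fin d // i ∈ Aᶜ} => X ω i))),
      ∀ θ : ℝ, ∫ y, ψ y (g x) ∂(κ x) ≤ ∫ y, ψ y θ ∂(κ x))
    -- all expectations are assumed finite
    (hint1 : Integrable (fun ω => ψ (f (X ω)) (g (fun i : {i : Fin d // i ∈ Aᶜ} => X ω i))) μ)
    (hint2 : Integrable (fun ω => ψ (f (X ω)) (f (X' ω))) μ) :
    ∫ ω, ψ (f (X ω)) (g (fun i : {i : Fin d // i ∈ Aᶜ} => X ω i)) ∂μ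
      ≤ ∫ ω, ψ (f (X ω)) (f (X' ω)) ∂μ := by
  set Z : Ω → ({i : Fin d // i ∈ Aᶜ} → ℝ) := fun ω i => X ω i
  have hZ : Measurable Z := by fun_prop
  have hU : Measurable fun ω => f (X ω) := hf.comp hX
  have hV : Measurable fun ω => f (X' ω) := hf.comp hX'
  have hZU := map_prodMk_eq_compProd hZ hU hκ
  have hZUV := map_prodMk_prodMk_eq_compProd_prod hZ hU hV hZU
    fun _ _ => condExp_indicator_inter_ae_eq_mul hf hiid
  exact integral_le_integral_of_lintegral_ofReal_le (.of_forall fun _ => hψ0 _ _)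
    (.of_forall fun _ => hψ0 _ _) hint1.aestronglyMeasurable hint2
    (lintegral_contrast_le_lintegral_divergence hZ hU hV hZU hZUV hψm hψ0 hg hmin hint1)

/-- If `ψ` is a divergence, `κ` is a regular conditional distribution of `f(X)` given
`X_{D∖A}`, and `g(x)` minimizes `θ ↦ ∫ ψ(y, θ) κ(x, dy)` for almost every `x`, then
the contrast-based index is bounded by the divergence-based one:
`E[ψ(f(X), g(X_{D∖A}))] ≤ E[ψ(f(X), f(X^{∖A}))]`. -/
theorem stmt5
    {Ω : Type*} [MeasurableSpace Ω] (μ : Measure Ω) [IsProbabilityMeasure μ]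
    {d : ℕ} (X : Ω → Fin d → ℝ) (hX : Measurable X)
    (f : (Fin d → ℝ) → ℝ) (hf : Measurable f)
    (ψ : ℝ → ℝ → ℝ) (hψm : Measurable fun q : ℝ × ℝ => ψ q.1 q.2)
    (hψ0 : ∀ x y : ℝ, 0 ≤ ψ x y) (hψeq : ∀ x y : ℝ, ψ x y = 0 ↔ x = y)
    (A : Finset (Fin d)) (X' : Ω → (Fin d → ℝ)) (hX' : Measurable X')
    -- (a) `X` and `X'` are conditionally i.i.d. given `σ(X_{D∖A})`
    (hiid : ∀ (φ φ' : (Fin d → ℝ) → ℝ),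
      Measurable φ → Measurable φ' →
      (∃ C, ∀ x, |φ x| ≤ C) → (∃ C, ∀ x, |φ' x| ≤ C) →
      μ[(fun ω => φ (X ω) * φ' (X' ω)) | sigmaRestrict X A]
        =ᵐ[μ] fun ω => (μ[(fun ω => φ (X ω)) | sigmaRestrict X A]) ω *
                        (μ[(fun ω => φ' (X ω)) | sigmaRestrict X A]) ω)
    -- (b) `X'` agrees with `X` on the coordinates outside `A`, almost surely
    (hfix : ∀ᵐ ω ∂μ, ∀ i ∉ A, X' ω i = X ω i)
    -- `κ` is a regular conditional distribution of `f(X)` given `X_{D∖A}`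
    (κ : Kernel ({i : Fin d // i ∈ Aᶜ} → ℝ) ℝ) [IsMarkovKernel κ]
    (hκ : ∀ (T : Set ({i : Fin d // i ∈ Aᶜ} → ℝ)), MeasurableSet T →
      ∀ (S : Set ℝ), MeasurableSet S →
      μ ((fun ω => (fun i : {i : Fin d // i ∈ Aᶜ} => X ω i)) ⁻¹' T ∩
          (fun ω => f (X ω)) ⁻¹' S)
        = ∫⁻ x in T, κ x S ∂(μ.map (fun ω => (fun i : {i : Fin d // i ∈ Aᶜ} => X ω i))))
    -- `g(x)` minimizes `θ ↦ ∫ ψ(y, θ) κ(x, dy)` for almost every `x`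
    (g : ({i : Fin d // i ∈ Aᶜ} → ℝ) → ℝ) (hg : Measurable g)
    (hmin : ∀ᵐ x ∂(μ.map (fun ω => (fun i : {i : Fin d // i ∈ Aᶜ} => X ω i))),
      ∀ θ : ℝ, ∫ y, ψ y (g x) ∂(κ x) ≤ ∫ y, ψ y θ ∂(κ x))
    -- all expectations are assumed finite
    (hint1 : Integrable (fun ω => ψ (f (X ω)) (g (fun i : {i : Fin d // i ∈ Aᶜ} => X ω i))) μ)
    (hint2 : Integrable (fun ω => ψ (f (X ω)) (f (X' ω))) μ)
    (hint3 : ∀ᵐ x ∂(μ.map (fun ω => (fun i : {i : Fin d // i ∈ Aᶜ} => X ω i))),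
      ∀ θ : ℝ, Integrable (fun y => ψ y θ) (κ x)) :
    ∫ ω, ψ (f (X ω)) (g (fun i : {i : Fin d // i ∈ Aᶜ} => X ω i)) ∂μ
      ≤ ∫ ω, ψ (f (X ω)) (f (X' ω)) ∂μ :=
  stmt5_general μ X hX f hf ψ hψm hψ0 A X' hX' hiid κ hκ g hg hmin hint1 hint2
end

section
/- Suppose a weight family (p_B)_{B⊆D} is such that for every map τ : 2^D → [0,∞) with τ(∅) = 0, the weighted factorial effects I(B) = Σ_{A ⊆ D∖B} p_B(A) Δ_B τ(A) satisfy Σ_{B ⊆ A} I(B) = τ(A) for every A ⊆ D. Then necessarily p_B(A) = 1 if A = ∅ and p_B(A) = 0 otherwise, for every B ⊆ D; i.e., the weights yielding the full decomposition are unique and equal to the Möbius-transform weights. -/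
open Finset

/-- `Δ_B τ(A) = Σ_{C : A ⊆ C ⊆ A∪B} (−1)^{|B| − |C∖A|} τ(C)`. -/
noncomputable def deltaSet {d : ℕ} (B : Finset (Fin d)) (τ : Finset (Fin d) → ℝ)
    (A : Finset (Fin d)) : ℝ :=
  ∑ C ∈ Finset.Icc A (A ∪ B), (-1 : ℝ) ^ (B.card - (C \ A).card) * τ C

lemma deltaSet_indicator {d : ℕ} (B T C : Finset (Fin d)) (hBT : B ⊆ T)
    (hC : Disjoint C B) :
    deltaSet B (fun X => if X = T then (1:ℝ) else 0) C = if C = T \ B then 1 else 0 := by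
  unfold deltaSet
  simp only [mul_ite, mul_one, mul_zero]
  rw [Finset.sum_ite_eq' (Finset.Icc C (C ∪ B)) T]
  by_cases h : C = T \ B
  · subst h
    have hmem : T ∈ Finset.Icc (T \ B) (T \ B ∪ B) := by
      rw [Finset.mem_Icc]
      constructor
      · exact Finset.sdiff_subset
      · rw [Finset.sdiff_union_self_eq_union]
        exact Finset.subset_union_left
    rw [if_pos hmem, if_pos rfl]
    have h1 : T \ (T \ B) = B := by
      rw [sdiff_sdiff_right_self]
      exact inf_eq_right.mpr hBT
    rw [h1]
    simp
  · have hmem : T ∉ Finset.Icc C (C ∪ B) := by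
      rw [Finset.mem_Icc]
      rintro ⟨h1, h2⟩
      apply h
      apply Finset.Subset.antisymm
      · intro x hx
        rw [Finset.mem_sdiff]
        exact ⟨h1 hx, fun hxB => (Finset.disjoint_left.mp hC) hx hxB⟩
      · intro x hx
        rw [Finset.mem_sdiff] at hx
        rcases Finset.mem_union.mp (h2 hx.1) with h | h
        · exact h
        · exact absurd h hx.2
    rw [if_neg hmem, if_neg h]

lemma key {d : ℕ} (p : Finset (Fin d) → Finset (Fin d) → ℝ)
    (hp0 : ∀ B A, 0 ≤ p B A)
    (hdec : ∀ τ : Finset (Fin d) → ℝ, (∀ A, 0 ≤ τ A) → τ ∅ = 0 →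
      ∀ A : Finset (Fin d),
        ∑ B ∈ A.powerset, (∑ C ∈ Bᶜ.powerset, p B C * deltaSet B τ C) = τ A)
    (B A : Finset (Fin d)) (hAB : A ⊆ Bᶜ) (hA : A ≠ ∅) : p B A = 0 := by
  set T := A ∪ B with hT
  have hdisj : Disjoint A B := Finset.disjoint_left.mpr fun x hx hB => Finset.mem_compl.mp (hAB hx) hB
  set τ : Finset (Fin d) → ℝ := fun X => if X = T then 1 else 0 with hτ
  have hτ0 : ∀ X, 0 ≤ τ X := by intro X; simp only [hτ]; split <;> norm_num
  have hτe : τ ∅ = 0 := by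
    simp only [hτ]
    rw [if_neg]
    intro h
    apply hA
    have : A ⊆ (∅ : Finset (Fin d)) := by rw [h]; exact Finset.subset_union_left
    exact Finset.subset_empty.mp this
  have h := hdec τ hτ0 hτe B
  have hTB : τ B = 0 := by
    simp only [hτ]
    rw [if_neg]
    intro hBeq
    apply hA
    have hsub : A ⊆ B := by rw [hBeq]; exact Finset.subset_union_left
    exact Finset.eq_empty_of_forall_notMem fun x hx =>
      (Finset.disjoint_left.mp hdisj) hx (hsub hx)
  rw [hTB] at h
  have hinner : ∀ B' ∈ B.powerset,
      (∑ C ∈ B'ᶜ.powerset, p B' C * deltaSet B' τ C) = p B' (T \ B') := by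
    intro B' hB'
    rw [Finset.mem_powerset] at hB'
    have hB'T : B' ⊆ T := hB'.trans Finset.subset_union_right
    have : ∀ C ∈ B'ᶜ.powerset, p B' C * deltaSet B' τ C
        = if C = T \ B' then p B' C else 0 := by
      intro C hCmem
      rw [Finset.mem_powerset] at hCmem
      have hCd : Disjoint C B' := Finset.disjoint_left.mpr fun x hx hB => Finset.mem_compl.mp (hCmem hx) hB
      rw [hτ, deltaSet_indicator B' T C hB'T hCd]
      split <;> simp
    rw [Finset.sum_congr rfl this, Finset.sum_ite_eq' B'ᶜ.powerset (T \ B')]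
    rw [if_pos]
    rw [Finset.mem_powerset]
    intro x hx
    rw [Finset.mem_compl]
    exact (Finset.mem_sdiff.mp hx).2
  rw [Finset.sum_congr rfl hinner] at h
  have hall := (Finset.sum_eq_zero_iff_of_nonneg (fun B' _ => hp0 B' (T \ B'))).mp h
  have hBB := hall B (Finset.mem_powerset.mpr (Finset.Subset.refl B))
  have hTA : T \ B = A := by
    rw [hT, Finset.union_sdiff_right]
    exact Finset.sdiff_eq_self_of_disjoint hdisj
  rwa [hTA] at hBB

/-- Proposition 3 (uniqueness): if a weight family `(p_B)` is such that the weighted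
factorial effects `I(B) = Σ_{A ⊆ D∖B} p_B(A) Δ_B τ(A)` satisfy
`Σ_{B ⊆ A} I(B) = τ(A)` for every `A` and every nonnegative `τ` with `τ(∅) = 0`,
then `p_B(A) = 1` if `A = ∅` and `0` otherwise. -/
theorem stmt9 {d : ℕ} (p : Finset (Fin d) → Finset (Fin d) → ℝ)
    (hp0 : ∀ B A, 0 ≤ p B A)
    (hpz : ∀ B A : Finset (Fin d), ¬ A ⊆ Bᶜ → p B A = 0)
    (hp1 : ∀ B : Finset (Fin d), ∑ A ∈ Bᶜ.powerset, p B A = 1)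
    (hdec : ∀ τ : Finset (Fin d) → ℝ, (∀ A, 0 ≤ τ A) → τ ∅ = 0 →
      ∀ A : Finset (Fin d),
        ∑ B ∈ A.powerset, (∑ C ∈ Bᶜ.powerset, p B C * deltaSet B τ C) = τ A) :
    ∀ B A : Finset (Fin d), p B A = if A = ∅ then 1 else 0 := by
  intro B A
  by_cases hA : A = ∅
  · subst hA
    rw [if_pos rfl]
    have := hp1 B
    rwa [Finset.sum_eq_single_of_mem ∅ (Finset.mem_powerset.mpr (Finset.empty_subset _))
      (fun A' hA' hne => by
        rw [Finset.mem_powerset] at hA'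
        exact key p hp0 hdec B A' hA' hne)] at this
  · rw [if_neg hA]
    by_cases hsub : A ⊆ Bᶜ
    · exact key p hp0 hdec B A hsub hA
    · exact hpz B A hsub
end

section
/- For each i ∈ D let p_i : 2^{D∖{i}} → [0,∞) satisfy Σ_{A ⊆ D∖{i}} p_i(A) = 1, and for a map τ : 2^D → ℝ define I({i}) = Σ_{A ⊆ D∖{i}} p_i(A) (τ(A ∪ {i}) − τ(A)). Then the identity Σ_{i=1}^d I({i}) = τ(D) holds for every map τ : 2^D → [0,∞) with τ(∅) = 0 if and only if the following three conditions hold: (1) Σ_{i=1}^d p_i(∅) = 1; (2) for every A ⊆ D with A ≠ ∅ and A ≠ D, Σ_{i=1}^d (−1)^{1 − |A ∩ {i}|} p_i(A ∖ {i}) = 0 (equivalently, Σ_{i ∈ A} p_i(A∖{i}) = Σ_{i ∈ D∖A} p_i(A)); (3) Σ_{i=1}^d p_i(D ∖ {i}) = 1. -/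
/-!
Each main effect is linear in `τ`. Collecting the coefficient of every `τ(B)` writes `Σ_i I({i})`
as `Σ_B c(B) τ(B)` with `c = netWeight p`, i.e. `c(B) = Σ_{i ∈ B} p_i(B∖{i}) − Σ_{i ∉ B} p_i(B)`,
the signed sum of condition (2). The identity for all admissible `τ` then says exactly that `c`
vanishes off `∅` and `D` and `c(D) = 1` (test `τ` against indicators of single sets), which are
conditions (2) and (3). Since `Σ_B c(B) = 0` (take `τ ≡ 1`), this forces `c(∅) = −1`, which is
condition (1).
-/

open Finset

section Functional

variable {β : Type*} [Fintype β] [DecidableEq β]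

lemma forall_sum_mul_eq_apply_iff (c : β → ℝ) (hc : ∑ x, c x = 0) {a b : β} (hab : a ≠ b) :
    (∀ τ : β → ℝ, (∀ x, 0 ≤ τ x) → τ a = 0 → ∑ x, c x * τ x = τ b) ↔
      c a = -1 ∧ (∀ x, x ≠ a → x ≠ b → c x = 0) ∧ c b = 1 := by
  constructor
  · intro H
    have hsingle : ∀ x, x ≠ a → c x = if b = x then 1 else 0 := fun x hx => by
      simpa [Pi.single_apply, hx.symm] using H (Pi.single x 1) (by simp [Pi.single_apply]; grind)
    refine ⟨?_, fun x hxa hxb => by simp [hsingle x hxa, Ne.symm hxb], by simp [hsingle b hab.symm]⟩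
    have hcompl := H (1 - Pi.single a 1) (by simp [Pi.single_apply]; grind) (by simp)
    simp only [Pi.sub_apply, Pi.one_apply, mul_sub, mul_one, sum_sub_distrib, hc] at hcompl
    linarith [show -c a = 1 by simpa [Pi.single_apply, hab.symm] using hcompl]
  · rintro ⟨-, hzero, hb⟩ τ - hτa
    rw [sum_eq_single b (fun x _ hxb => ?_) (by simp), hb, one_mul]
    by_cases hxa : x = a
    · rw [hxa, hτa, mul_zero]
    · rw [hzero x hxa hxb, zero_mul]

end Functional

section NetWeight

variable {α : Type*} [Fintype α] [DecidableEq α]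

def netWeight (p : α → Finset α → ℝ) (B : Finset α) : ℝ :=
  ∑ i, if i ∈ B then p i (B.erase i) else -p i B

lemma sum_powerset_compl_mul_sub (p : α → Finset α → ℝ) (τ : Finset α → ℝ) (i : α) :
    ∑ A ∈ ({i}ᶜ : Finset α).powerset, p i A * (τ (A ∪ {i}) - τ A) =
      ∑ B, (if i ∈ B then p i (B.erase i) else -p i B) * τ B := by
  have hi : i ∉ ({i}ᶜ : Finset α) := by simp
  rw [← powerset_univ, ← insert_compl_self i, sum_powerset_insert hi, ← sum_add_distrib]
  refine sum_congr rfl fun A hA => ?_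
  have hiA : i ∉ A := fun h => hi (mem_powerset.1 hA h)
  simp [hiA, union_singleton]
  ring

lemma sum_powerset_compl_mul_sub_eq_sum_netWeight_mul (p : α → Finset α → ℝ)
    (τ : Finset α → ℝ) :
    ∑ i, ∑ A ∈ ({i}ᶜ : Finset α).powerset, p i A * (τ (A ∪ {i}) - τ A) =
      ∑ B, netWeight p B * τ B := by
  simp only [sum_powerset_compl_mul_sub, netWeight, sum_mul]
  exact sum_comm

lemma sum_netWeight (p : α → Finset α → ℝ) : ∑ B, netWeight p B = 0 := by
  simpa using (sum_powerset_compl_mul_sub_eq_sum_netWeight_mul p 1).symm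

lemma netWeight_empty (p : α → Finset α → ℝ) : netWeight p ∅ = -∑ i, p i ∅ := by
  simp [netWeight]

lemma netWeight_univ (p : α → Finset α → ℝ) : netWeight p univ = ∑ i, p i {i}ᶜ := by
  simp [netWeight, compl_singleton]

lemma sum_neg_one_pow_mul_eq_netWeight (p : α → Finset α → ℝ) (A : Finset α) :
    ∑ i, (-1 : ℝ) ^ (1 - (A ∩ {i}).card) * p i (A \ {i}) = netWeight p A := by
  refine sum_congr rfl fun i _ => ?_
  by_cases hi : i ∈ A <;> simp [hi, sdiff_singleton_eq_erase]

end NetWeight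

theorem stmt10_general {d : ℕ} (hd : 1 ≤ d) (p : Fin d → Finset (Fin d) → ℝ) :
    (∀ τ : Finset (Fin d) → ℝ, (∀ A, 0 ≤ τ A) → τ ∅ = 0 →
        ∑ i : Fin d, ∑ A ∈ (({i} : Finset (Fin d))ᶜ).powerset,
          p i A * (τ (A ∪ {i}) - τ A) = τ Finset.univ)
    ↔ ((∑ i : Fin d, p i ∅ = 1) ∧
       (∀ A : Finset (Fin d), A ≠ ∅ → A ≠ Finset.univ →
          ∑ i : Fin d, (-1 : ℝ) ^ (1 - (A ∩ {i}).card) * p i (A \ {i}) = 0) ∧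
       (∑ i : Fin d, p i (({i} : Finset (Fin d))ᶜ) = 1)) := by
  have : Nonempty (Fin d) := ⟨⟨0, hd⟩⟩
  simp only [sum_powerset_compl_mul_sub_eq_sum_netWeight_mul, sum_neg_one_pow_mul_eq_netWeight]
  rw [forall_sum_mul_eq_apply_iff _ (sum_netWeight p) univ_nonempty.ne_empty.symm,
    netWeight_empty, netWeight_univ, neg_inj]

/-- Proposition 4: with main effects `I({i}) = Σ_{A ⊆ D∖{i}} p_i(A)(τ(A∪{i}) − τ(A))`,
the identity `Σ_{i=1}^d I({i}) = τ(D)` holds for every nonnegative `τ` with `τ(∅) = 0`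
if and only if the three conditions on the weights hold. -/
theorem stmt10 {d : ℕ} (hd : 1 ≤ d) (p : Fin d → Finset (Fin d) → ℝ)
    (hp0 : ∀ i A, 0 ≤ p i A)
    (hpz : ∀ (i : Fin d) (A : Finset (Fin d)), ¬ A ⊆ ({i} : Finset (Fin d))ᶜ → p i A = 0)
    (hp1 : ∀ i : Fin d, ∑ A ∈ (({i} : Finset (Fin d))ᶜ).powerset, p i A = 1) :
    (∀ τ : Finset (Fin d) → ℝ, (∀ A, 0 ≤ τ A) → τ ∅ = 0 →
        ∑ i : Fin d, ∑ A ∈ (({i} : Finset (Fin d))ᶜ).powerset,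
          p i A * (τ (A ∪ {i}) - τ A) = τ Finset.univ)
    ↔ ((∑ i : Fin d, p i ∅ = 1) ∧
       (∀ A : Finset (Fin d), A ≠ ∅ → A ≠ Finset.univ →
          ∑ i : Fin d, (-1 : ℝ) ^ (1 - (A ∩ {i}).card) * p i (A \ {i}) = 0) ∧
       (∑ i : Fin d, p i (({i} : Finset (Fin d))ᶜ) = 1)) :=
  stmt10_general hd p
end

section
/- Let B ⊆ D with |B| odd, and let p_B : 2^{D∖B} → [0,∞) satisfy Σ_{A ⊆ D∖B} p_B(A) = 1, extended by p_B(A) = 0 if A is not a subset of D∖B. For a map τ : 2^D → ℝ define I_τ(B) = Σ_{A ⊆ D} (−1)^{|B∖A|} p_B(A∖B) τ(A) and the dual τ*(A) = τ(D) − τ(D∖A). Then I_{τ*}(B) = I_τ(B) holds for every map τ : 2^D → [0,∞) with τ(∅) = 0 if and only if p_B(A∖B) = p_B(D ∖ (A ∪ B)) for every nonempty A ⊆ D. -/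
/-!
Since `∑_A (-1)^{|B∖A|} p(A∖B)` vanishes for nonempty `B`, the constant `τ(D)` in `τ*` drops out
of `I_{τ*}(B)`. Substituting `A ↦ Aᶜ` in the remaining term and using
`(-1)^{|B∩A|} = -(-1)^{|B∖A|}` for `|B|` odd gives
`I_{τ*}(B) = Σ_A (-1)^{|B∖A|} p(D∖(A∪B)) τ(A)`. Comparing coefficients with `I_τ(B)`, which can be
read off by taking `τ` the indicator of a single nonempty set, yields the criterion.
-/

open Finset

namespace FactorialEffect

theorem neg_one_pow_card_inter_of_odd {α R : Type*} [DecidableEq α] [Ring R] {B : Finset α}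
    (hB : Odd B.card) (A : Finset α) :
    (-1 : R) ^ (B ∩ A).card = -(-1 : R) ^ (B \ A).card := by
  have h := congrArg (fun n => (-1 : R) ^ n) (card_inter_add_card_sdiff B A)
  simp only [pow_add, hB.neg_one_pow] at h
  calc (-1 : R) ^ (B ∩ A).card
      = (-1) ^ (B ∩ A).card * (-1) ^ (B \ A).card * (-1) ^ (B \ A).card := by
        rw [mul_assoc, ← pow_add, ← two_mul, pow_mul, neg_one_sq, one_pow, mul_one]
    _ = -(-1 : R) ^ (B \ A).card := by rw [h, neg_one_mul]

variable {α R : Type*} [Fintype α] [DecidableEq α]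

def factorialEffect [Ring R] (B : Finset α) (p τ : Finset α → R) : R :=
  ∑ A : Finset α, (-1 : R) ^ (B \ A).card * p (A \ B) * τ A

def dual [Sub R] (τ : Finset α → R) (A : Finset α) : R :=
  τ univ - τ Aᶜ

theorem sum_neg_one_pow_card_sdiff_mul_eq_zero [Ring R] {B : Finset α} (hB : B.Nonempty)
    (f : Finset α → R) :
    ∑ A : Finset α, (-1 : R) ^ (B \ A).card * f (A \ B) = 0 := by
  obtain ⟨b, hb⟩ := hB
  -- pair each `A ∌ b` with `insert b A`: `A \ B` is unchanged while `|B \ A|` drops by one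
  rw [← powerset_univ, ← insert_erase (mem_univ b),
    sum_powerset_insert (notMem_erase b univ), ← sum_add_distrib]
  refine sum_eq_zero fun A hA => ?_
  have hbA : b ∉ A := fun h => notMem_erase b univ (mem_powerset.mp hA h)
  have hcard : (B \ insert b A).card + 1 = (B \ A).card := by
    rw [sdiff_insert]
    exact card_erase_add_one (mem_sdiff.mpr ⟨hb, hbA⟩)
  rw [insert_sdiff_of_mem A hb, ← hcard, pow_succ]
  noncomm_ring

theorem factorialEffect_dual [CommRing R] {B : Finset α} (hB : Odd B.card) (p τ : Finset α → R) :
    factorialEffect B p (dual τ) = ∑ A : Finset α, (-1 : R) ^ (B \ A).card * p (A ∪ B)ᶜ * τ A := by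
  have hconst : ∑ A : Finset α, (-1 : R) ^ (B \ A).card * p (A \ B) * τ univ = 0 := by
    rw [← sum_mul, sum_neg_one_pow_card_sdiff_mul_eq_zero (card_pos.mp hB.pos), zero_mul]
  have hcompl : ∑ A : Finset α, (-1 : R) ^ (B \ A).card * p (A \ B) * τ Aᶜ
      = ∑ A : Finset α, (-1 : R) ^ (B ∩ A).card * p (A ∪ B)ᶜ * τ A := by
    refine Fintype.sum_equiv (Equiv.ofBijective compl compl_bijective) _ _ fun A => ?_
    simp only [Equiv.ofBijective_apply, compl_compl, compl_union, sdiff_eq_inter_compl]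
  simp only [factorialEffect, dual, mul_sub, sum_sub_distrib, hconst, hcompl,
    neg_one_pow_card_inter_of_odd hB, zero_sub, ← sum_neg_distrib]
  refine sum_congr rfl fun A _ => ?_
  ring

end FactorialEffect

open FactorialEffect in
theorem stmt13_general {d : ℕ} (B : Finset (Fin d)) (hodd : Odd B.card)
    (p : Finset (Fin d) → ℝ) :
    (∀ τ : Finset (Fin d) → ℝ, (∀ A, 0 ≤ τ A) → τ ∅ = 0 →
        ∑ A : Finset (Fin d), (-1 : ℝ) ^ (B \ A).card * p (A \ B) * (τ Finset.univ - τ Aᶜ)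
          = ∑ A : Finset (Fin d), (-1 : ℝ) ^ (B \ A).card * p (A \ B) * τ A)
    ↔ (∀ A : Finset (Fin d), A ≠ ∅ → p (A \ B) = p ((A ∪ B)ᶜ)) := by
  constructor
  · intro hself A₀ hA₀
    have h :
        factorialEffect B p (dual (Pi.single A₀ 1)) = factorialEffect B p (Pi.single A₀ 1) :=
      hself _ (fun A => by by_cases hA : A = A₀ <;> simp [hA]) (Pi.single_eq_of_ne hA₀.symm _)
    rw [factorialEffect_dual hodd] at h
    simp only [factorialEffect, Pi.single_apply, mul_ite, mul_one, mul_zero, sum_ite_eq',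
      mem_univ, if_true] at h
    exact (mul_left_cancel₀ (pow_ne_zero _ (by norm_num)) h).symm
  · intro hsymm τ _ hτ
    change factorialEffect B p (dual τ) = factorialEffect B p τ
    rw [factorialEffect_dual hodd]
    refine sum_congr rfl fun A _ => ?_
    rcases eq_or_ne A ∅ with rfl | hA
    · simp [hτ]
    · rw [hsymm A hA]

/-- Proposition 5: for `B` of odd cardinality, the weighted factorial effect
`I_τ(B) = Σ_{A ⊆ D} (−1)^{|B∖A|} p_B(A∖B) τ(A)` is self-dual (i.e. `I_{τ*}(B) = I_τ(B)`
where `τ*(A) = τ(D) − τ(D∖A)`) for every nonnegative `τ` with `τ(∅) = 0` if and only if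
`p_B(A∖B) = p_B(D ∖ (A∪B))` for every nonempty `A ⊆ D`. -/
theorem stmt13 {d : ℕ} (B : Finset (Fin d)) (hodd : Odd B.card)
    (p : Finset (Fin d) → ℝ) (hp0 : ∀ A, 0 ≤ p A)
    (hpz : ∀ A : Finset (Fin d), ¬ A ⊆ Bᶜ → p A = 0)
    (hp1 : ∑ A ∈ Bᶜ.powerset, p A = 1) :
    (∀ τ : Finset (Fin d) → ℝ, (∀ A, 0 ≤ τ A) → τ ∅ = 0 →
        ∑ A : Finset (Fin d), (-1 : ℝ) ^ (B \ A).card * p (A \ B) * (τ Finset.univ - τ Aᶜ)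
          = ∑ A : Finset (Fin d), (-1 : ℝ) ^ (B \ A).card * p (A \ B) * τ A)
    ↔ (∀ A : Finset (Fin d), A ≠ ∅ → p (A \ B) = p ((A ∪ B)ᶜ)) :=
  stmt13_general B hodd p
end

section
/- Let B ⊆ D with |B| odd and let p_B be the equal weights p_B(A) = 1/2^{d−|B|} for every A ⊆ D∖B (and 0 otherwise). Then for every map τ : 2^D → ℝ with τ(∅) = 0, the weighted factorial effect is self-dual: Σ_{A ⊆ D} (−1)^{|B∖A|} p_B(A∖B) τ*(A) = Σ_{A ⊆ D} (−1)^{|B∖A|} p_B(A∖B) τ(A), where τ*(A) = τ(D) − τ(D∖A). -/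
open Finset

/-- Corollary (equal weights): for `B` of odd cardinality and the equal weights
`p_B(A) = 1/2^{d−|B|}` for `A ⊆ D∖B` (and `0` otherwise), the weighted factorial
effect is self-dual for every `τ` with `τ(∅) = 0`, where `τ*(A) = τ(D) − τ(D∖A)`. -/
theorem stmt14 {d : ℕ} (B : Finset (Fin d)) (hodd : Odd B.card)
    (p : Finset (Fin d) → ℝ)
    (hp : p = fun A => if A ⊆ Bᶜ then (1 : ℝ) / 2 ^ (d - B.card) else 0)
    (τ : Finset (Fin d) → ℝ) (hτ : τ ∅ = 0) :
    ∑ A : Finset (Fin d), (-1 : ℝ) ^ (B \ A).card * p (A \ B) * (τ Finset.univ - τ Aᶜ)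
      = ∑ A : Finset (Fin d), (-1 : ℝ) ^ (B \ A).card * p (A \ B) * τ A := by
  set c : ℝ := 1 / 2 ^ (d - B.card) with hc
  have hpc : ∀ A : Finset (Fin d), p (A \ B) = c := by
    intro A
    have hsub : A \ B ⊆ Bᶜ := by
      intro x hx
      simp only [mem_sdiff] at hx
      simp [Finset.mem_compl, hx.2]
    simp [hp, hsub]
  -- reindexing by complement
  have reindex : ∀ F : Finset (Fin d) → ℝ,
      ∑ A : Finset (Fin d), F Aᶜ = ∑ A : Finset (Fin d), F A := by
    intro F
    exact Fintype.sum_bijective compl compl_involutive.bijective _ _ (fun A => rfl)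
  -- key sign identity
  have key : ∀ A : Finset (Fin d),
      ((-1 : ℝ)) ^ (B \ Aᶜ).card = -(-1 : ℝ) ^ (B \ A).card := by
    intro A
    have hcard : (B \ Aᶜ).card + (B \ A).card = B.card := by
      have h1 : B \ Aᶜ = B ∩ A := by
        ext x; simp [mem_sdiff, mem_inter, Finset.mem_compl]
      rw [h1, Finset.card_inter_add_card_sdiff]
    have h1 : (-1 : ℝ) ^ ((B \ Aᶜ).card + (B \ A).card) = -1 := by
      rw [hcard]; exact hodd.neg_one_pow
    rw [pow_add] at h1
    have h2 : ((-1 : ℝ) ^ (B \ A).card) * ((-1 : ℝ) ^ (B \ A).card) = 1 := by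
      rw [← pow_add]
      exact Even.neg_one_pow ⟨(B \ A).card, rfl⟩
    set x := (-1 : ℝ) ^ (B \ Aᶜ).card
    set y := (-1 : ℝ) ^ (B \ A).card
    linear_combination y * h1 - x * h2
  simp only [hpc]
  -- split the left sum
  have hsplit : ∑ A : Finset (Fin d), (-1 : ℝ) ^ (B \ A).card * c * (τ Finset.univ - τ Aᶜ)
      = (τ Finset.univ) * ∑ A : Finset (Fin d), (-1 : ℝ) ^ (B \ A).card * c
        - ∑ A : Finset (Fin d), (-1 : ℝ) ^ (B \ A).card * c * τ Aᶜ := by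
    rw [Finset.mul_sum, ← Finset.sum_sub_distrib]
    apply Finset.sum_congr rfl
    intro A _
    ring
  rw [hsplit]
  have hS0 : ∑ A : Finset (Fin d), (-1 : ℝ) ^ (B \ A).card * c = 0 := by
    have h := reindex (fun A => (-1 : ℝ) ^ (B \ A).card * c)
    simp only [key] at h
    have := h
    simp only [neg_mul, Finset.sum_neg_distrib] at this
    linarith
  have hS1 : ∑ A : Finset (Fin d), (-1 : ℝ) ^ (B \ A).card * c * τ Aᶜ
      = - ∑ A : Finset (Fin d), (-1 : ℝ) ^ (B \ A).card * c * τ A := by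
    have h := reindex (fun A => (-1 : ℝ) ^ (B \ Aᶜ).card * c * τ A)
    simp only [compl_compl] at h
    rw [h]
    simp only [key, neg_mul, Finset.sum_neg_distrib]
  rw [hS0, hS1]
  ring
end

section
/- Let B ⊆ D with |B| odd and let p_B be the Shapley weights p_B(A) = 1 / ((|D∖B| + 1) · C(|D∖B|, |A|)) for every A ⊆ D∖B (and 0 otherwise), where C(n,k) is the binomial coefficient. Then for every map τ : 2^D → ℝ with τ(∅) = 0, the weighted factorial effect is self-dual: Σ_{A ⊆ D} (−1)^{|B∖A|} p_B(A∖B) τ*(A) = Σ_{A ⊆ D} (−1)^{|B∖A|} p_B(A∖B) τ(A), where τ*(A) = τ(D) − τ(D∖A). -/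
open Finset

private lemma zero_sum_aux {d : ℕ} (B : Finset (Fin d)) (hodd : Odd B.card)
    (q : Finset (Fin d) → ℝ) :
    ∑ A : Finset (Fin d), (-1 : ℝ) ^ (B \ A).card * q (A \ B) = 0 := by
  obtain ⟨b, hb⟩ : B.Nonempty := card_pos.mp (by rcases hodd with ⟨k, hk⟩; omega)
  classical
  apply Finset.sum_ninvolution (fun A => if b ∈ A then A.erase b else insert b A)
  · intro A
    by_cases hA : b ∈ A
    · simp only [hA, if_true]
      have h1 : A.erase b \ B = A \ B := by
        ext x
        simp only [mem_erase, mem_sdiff]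
        constructor
        · rintro ⟨⟨_, hx⟩, hxB⟩; exact ⟨hx, hxB⟩
        · rintro ⟨hx, hxB⟩; exact ⟨⟨fun h => hxB (h ▸ hb), hx⟩, hxB⟩
      have h2 : B \ A.erase b = insert b (B \ A) := by
        ext x; by_cases hx : x = b <;> simp [mem_sdiff, mem_erase, hx, hb, hA]
      rw [h1, h2, card_insert_of_notMem (by simp [hA]), pow_succ]
      ring
    · simp only [hA, if_false]
      have h1 : insert b A \ B = A \ B := by
        ext x; by_cases hx : x = b <;> simp [mem_sdiff, mem_insert, hx, hb]
      have h2 : B \ A = insert b (B \ insert b A) := by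
        ext x; by_cases hx : x = b <;> simp [mem_sdiff, mem_insert, hx, hb, hA]
      rw [h1, h2, card_insert_of_notMem (by simp), pow_succ]
      ring
  · intro A _
    by_cases hA : b ∈ A
    · simp only [hA, if_true]
      intro h
      exact (notMem_erase b A) (h.symm ▸ hA)
    · simp only [hA, if_false]
      intro h; exact hA (h ▸ mem_insert_self b A)
  · intro A; exact mem_univ _
  · intro A
    by_cases hA : b ∈ A
    · simp [hA]
    · simp [hA, erase_insert hA]

/-- Corollary (Shapley weights): for `B` of odd cardinality and the Shapley weights
`p_B(A) = 1/((|D∖B|+1)·C(|D∖B|,|A|))` for `A ⊆ D∖B` (and `0` otherwise), the weighted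
factorial effect is self-dual for every `τ` with `τ(∅) = 0`, where
`τ*(A) = τ(D) − τ(D∖A)`. -/
theorem stmt15 {d : ℕ} (B : Finset (Fin d)) (hodd : Odd B.card)
    (p : Finset (Fin d) → ℝ)
    (hp : p = fun A => if A ⊆ Bᶜ then
        (1 : ℝ) / (((d - B.card + 1) * (d - B.card).choose A.card : ℕ) : ℝ) else 0)
    (τ : Finset (Fin d) → ℝ) (hτ : τ ∅ = 0) :
    ∑ A : Finset (Fin d), (-1 : ℝ) ^ (B \ A).card * p (A \ B) * (τ Finset.univ - τ Aᶜ)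
      = ∑ A : Finset (Fin d), (-1 : ℝ) ^ (B \ A).card * p (A \ B) * τ A := by
  classical
  have hBd : B.card ≤ d := by simpa using card_le_card (subset_univ B)
  have key : ∀ A : Finset (Fin d),
      (-1 : ℝ) ^ (B \ Aᶜ).card * p (Aᶜ \ B) = -((-1 : ℝ) ^ (B \ A).card * p (A \ B)) := by
    intro A
    -- sign part
    have hcard : (B \ A).card + (B \ Aᶜ).card = B.card := by
      have : B \ Aᶜ = B ∩ A := by ext x; simp [mem_sdiff, mem_inter]
      rw [this]; exact card_sdiff_add_card_inter B A
    have hsign : (-1 : ℝ) ^ (B \ Aᶜ).card = -(-1 : ℝ) ^ (B \ A).card := by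
      have h1 : ((-1 : ℝ) ^ (B \ A).card) * ((-1 : ℝ) ^ (B \ Aᶜ).card) = -1 := by
        rw [← pow_add, hcard]; exact hodd.neg_one_pow
      have h2 : ((-1 : ℝ) ^ (B \ A).card) * ((-1 : ℝ) ^ (B \ A).card) = 1 := by
        rw [← pow_add, ← two_mul, pow_mul]; norm_num
      calc (-1 : ℝ) ^ (B \ Aᶜ).card
          = ((-1 : ℝ) ^ (B \ A).card * (-1 : ℝ) ^ (B \ A).card) * (-1 : ℝ) ^ (B \ Aᶜ).card := by
            rw [h2, one_mul]
        _ = (-1 : ℝ) ^ (B \ A).card * (-1 : ℝ) ^ (B \ A).card * (-1 : ℝ) ^ (B \ Aᶜ).card := rfl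
        _ = -(-1 : ℝ) ^ (B \ A).card := by rw [mul_assoc, h1]; ring
    -- weight part
    have hpeq : p (Aᶜ \ B) = p (A \ B) := by
      have hsub1 : Aᶜ \ B ⊆ Bᶜ := fun x hx => by
        simp only [mem_sdiff] at hx; simp [hx.2]
      have hsub2 : A \ B ⊆ Bᶜ := fun x hx => by
        simp only [mem_sdiff] at hx; simp [hx.2]
      have hcompl : Aᶜ \ B = Bᶜ \ (A \ B) := by
        ext x; simp [mem_sdiff, mem_compl]; tauto
      have hcardB : Bᶜ.card = d - B.card := by
        rw [card_compl]; simp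
      have hle : (A \ B).card ≤ d - B.card := by
        rw [← hcardB]; exact card_le_card hsub2
      have hcards : (Aᶜ \ B).card = (d - B.card) - (A \ B).card := by
        rw [hcompl, card_sdiff_of_subset hsub2, hcardB]
      rw [hp]
      simp only [hsub1, hsub2, if_true, hcards]
      rw [Nat.choose_symm hle]
    rw [hsign, hpeq]; ring
  have split : ∑ A : Finset (Fin d), (-1 : ℝ) ^ (B \ A).card * p (A \ B) * (τ Finset.univ - τ Aᶜ)
      = (∑ A : Finset (Fin d), (-1 : ℝ) ^ (B \ A).card * p (A \ B)) * τ Finset.univ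
        - ∑ A : Finset (Fin d), (-1 : ℝ) ^ (B \ A).card * p (A \ B) * τ Aᶜ := by
    rw [sum_mul, ← sum_sub_distrib]
    congr 1; ext A; ring
  rw [split, zero_sum_aux B hodd p, zero_mul, zero_sub]
  have reindex : ∑ A : Finset (Fin d), (-1 : ℝ) ^ (B \ A).card * p (A \ B) * τ Aᶜ
      = ∑ A : Finset (Fin d), (-1 : ℝ) ^ (B \ Aᶜ).card * p (Aᶜ \ B) * τ A := by
    apply Fintype.sum_equiv ⟨compl, compl, compl_compl, compl_compl⟩
    intro A; simp
  rw [reindex]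
  rw [← Finset.sum_neg_distrib]
  congr 1; ext A
  rw [key A]; ring
end
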